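/- arXiv:0704.0736 — 2 statements merged into one kernel-verified Lean document; each statement's English description precedes it below -/
import Mathlib

section
/- The shifts of the Haar wavelet function form an orthonormal system: for all a, b ∈ I_2, ∫_{ℚ_2} ψ⁰(x − a) · conj(ψ⁰(x − b)) dμ(x) equals 1 if a = b and equals 0 if a ≠ b. -/
open MeasureTheory

/-- The refinable function: the indicator of `ℤ_2` inside `ℚ_[2]`. -/
noncomputable def phi2 : ℚ_[2] → ℂ :=
  Set.indicator {x : ℚ_[2] | ‖x‖ ≤ 1} 1

/-- The 2-adic Haar wavelet function `ψ⁰(x) = φ(x/2) − φ(x/2 − 1/2)`. -/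
noncomputable def psi0 : ℚ_[2] → ℂ :=
  fun x => phi2 (x / 2) - phi2 (x / 2 - 1 / 2)

/-- The set `I_2` of fractional-part representatives of `ℚ_2/ℤ_2`. -/
def I2 : Set ℚ_[2] :=
  {a | ∃ γ m : ℕ, m < 2 ^ γ ∧ a = (m : ℚ_[2]) / (2 : ℚ_[2]) ^ γ}

/-!
On `ℤ_2` the wavelet `ψ⁰` is `1` on `2ℤ_2` and `-1` on `1 + 2ℤ_2`, and it vanishes off `ℤ_2`; so
`ψ⁰ · conj ψ⁰` is the indicator of `ℤ_2`, whose integral against the translation-invariant `μ`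
is `μ(ℤ_2) = 1`. Two points `m / 2^γ`, `n / 2^δ` of `I_2` differ by `k / 2^(γ+δ)` with
`|k| < 2^(γ+δ)`, which lies in `ℤ_2` only if `2^(γ+δ) ∣ k`, i.e. `k = 0`; so for `a ≠ b` the
supports `a + ℤ_2` and `b + ℤ_2` of the two shifted wavelets are disjoint and the integrand
vanishes identically.
-/

theorem IsUltrametricDist.norm_sub_eq_max_of_norm_ne_norm {S : Type*} [SeminormedAddGroup S]
    [IsUltrametricDist S] {x y : S} (h : ‖x‖ ≠ ‖y‖) : ‖x - y‖ = max ‖x‖ ‖y‖ := by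
  simpa only [sub_eq_add_neg, norm_neg] using
    norm_add_eq_max_of_norm_ne_norm (x := x) (y := -y) (by rwa [norm_neg])

namespace Padic

variable {p : ℕ} [Fact p.Prime]

theorem norm_le_inv_of_norm_lt_one {x : ℚ_[p]} (h : ‖x‖ < 1) : ‖x‖ ≤ (p : ℝ)⁻¹ := by
  simpa using (norm_lt_pow_iff_norm_le_pow_sub_one x 0).1 (by simpa using h)

theorem exists_nat_lt_norm_sub_le_inv {x : ℚ_[p]} (hx : ‖x‖ ≤ 1) :
    ∃ k : ℕ, k < p ∧ ‖x - k‖ ≤ (p : ℝ)⁻¹ := by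
  obtain ⟨k, hkp, hk⟩ := PadicInt.exists_mem_range (⟨x, hx⟩ : ℤ_[p])
  rw [IsLocalRing.mem_maximalIdeal, PadicInt.mem_nonunits] at hk
  exact ⟨k, hkp, norm_le_inv_of_norm_lt_one hk⟩

theorem norm_intCast_div_pow_le_one_iff (k : ℤ) (n : ℕ) :
    ‖(k : ℚ_[p]) / (p : ℚ_[p]) ^ n‖ ≤ 1 ↔ (p : ℤ) ^ n ∣ k := by
  have hp : (0 : ℝ) < (p : ℝ) ^ n := pow_pos (Nat.cast_pos.2 (Fact.out : p.Prime).pos) n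
  rw [← norm_int_le_pow_iff_dvd, norm_div, norm_pow, norm_p, inv_pow, div_inv_eq_mul,
    ← le_div_iff₀ hp, zpow_neg, zpow_natCast, one_div]

theorem eq_of_norm_sub_le_one {γ δ m n : ℕ} (hm : m < p ^ γ) (hn : n < p ^ δ)
    (h : ‖(m : ℚ_[p]) / (p : ℚ_[p]) ^ γ - n / (p : ℚ_[p]) ^ δ‖ ≤ 1) :
    (m : ℚ_[p]) / (p : ℚ_[p]) ^ γ = n / (p : ℚ_[p]) ^ δ := by
  have hp : (p : ℚ_[p]) ≠ 0 := Nat.cast_ne_zero.2 (Fact.out : p.Prime).ne_zero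
  have hp0 : (0 : ℤ) < p := Nat.cast_pos.2 (Fact.out : p.Prime).pos
  set k : ℤ := m * p ^ δ - n * p ^ γ
  have hdiff : (m : ℚ_[p]) / (p : ℚ_[p]) ^ γ - n / (p : ℚ_[p]) ^ δ
      = (k : ℚ_[p]) / (p : ℚ_[p]) ^ (γ + δ) := by
    field_simp; push_cast [k]; ring
  rw [hdiff, norm_intCast_div_pow_le_one_iff] at h
  have hk : |k| < (p : ℤ) ^ (γ + δ) := by
    have hm' : (m : ℤ) * p ^ δ < p ^ (γ + δ) := by
      rw [pow_add]; exact mul_lt_mul_of_pos_right (by exact_mod_cast hm) (pow_pos hp0 _)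
    have hn' : (n : ℤ) * p ^ γ < p ^ (γ + δ) := by
      rw [pow_add, mul_comm ((p : ℤ) ^ γ)]
      exact mul_lt_mul_of_pos_right (by exact_mod_cast hn) (pow_pos hp0 _)
    rw [abs_lt]; constructor <;> linarith [show (0 : ℤ) ≤ m * p ^ δ by positivity,
      show (0 : ℤ) ≤ n * p ^ γ by positivity]
  rw [← sub_eq_zero, hdiff, Int.eq_zero_of_abs_lt_dvd h hk, Int.cast_zero, zero_div]

theorem norm_two : ‖(2 : ℚ_[2])‖ = 2⁻¹ := by
  simpa using norm_p (p := 2)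

theorem norm_div_two (x : ℚ_[2]) : ‖x / 2‖ = 2 * ‖x‖ := by
  rw [norm_div, norm_two, div_inv_eq_mul, mul_comm]

end Padic

theorem phi2_of_norm_le_one {x : ℚ_[2]} (h : ‖x‖ ≤ 1) : phi2 x = 1 :=
  Set.indicator_of_mem h 1

theorem phi2_of_one_lt_norm {x : ℚ_[2]} (h : 1 < ‖x‖) : phi2 x = 0 :=
  Set.indicator_of_notMem h.not_ge 1

theorem psi0_eq_sub (x : ℚ_[2]) : psi0 x = phi2 (x / 2) - phi2 ((x - 1) / 2) := by
  rw [psi0, sub_div]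

theorem psi0_of_norm_le_half {x : ℚ_[2]} (h : ‖x‖ ≤ 2⁻¹) : psi0 x = 1 := by
  have h1 : ‖x - 1‖ = 1 := by
    rw [IsUltrametricDist.norm_sub_eq_max_of_norm_ne_norm (by norm_num; linarith), norm_one,
      max_eq_right (by linarith)]
  rw [psi0_eq_sub, phi2_of_norm_le_one (by rw [Padic.norm_div_two]; linarith),
    phi2_of_one_lt_norm (by rw [Padic.norm_div_two, h1]; norm_num), sub_zero]

theorem psi0_of_norm_sub_one_le_half {x : ℚ_[2]} (h : ‖x - 1‖ ≤ 2⁻¹) : psi0 x = -1 := by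
  have h1 : ‖x‖ = 1 := by
    have h' : ‖(1 : ℚ_[2])‖ ≠ ‖1 - x‖ := by rw [norm_sub_rev]; norm_num; linarith
    rw [← sub_sub_cancel 1 x, IsUltrametricDist.norm_sub_eq_max_of_norm_ne_norm h', norm_one,
      max_eq_left (by rw [norm_sub_rev]; linarith)]
  rw [psi0_eq_sub, phi2_of_one_lt_norm (by rw [Padic.norm_div_two, h1]; norm_num),
    phi2_of_norm_le_one (by rw [Padic.norm_div_two]; linarith), zero_sub]

theorem psi0_of_one_lt_norm {x : ℚ_[2]} (h : 1 < ‖x‖) : psi0 x = 0 := by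
  have h1 : ‖x - 1‖ = ‖x‖ := by
    rw [IsUltrametricDist.norm_sub_eq_max_of_norm_ne_norm (by norm_num; linarith), norm_one,
      max_eq_left h.le]
  rw [psi0_eq_sub, phi2_of_one_lt_norm (by rw [Padic.norm_div_two]; linarith),
    phi2_of_one_lt_norm (by rw [Padic.norm_div_two, h1]; linarith), sub_zero]

theorem psi0_mul_conj_self (x : ℚ_[2]) :
    psi0 x * starRingEnd ℂ (psi0 x) = Set.indicator {y : ℚ_[2] | ‖y‖ ≤ 1} 1 x := by
  by_cases h : ‖x‖ ≤ 1
  · rw [Set.indicator_of_mem (show x ∈ {y : ℚ_[2] | ‖y‖ ≤ 1} from h), Pi.one_apply]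
    obtain ⟨k, hk, hxk⟩ := Padic.exists_nat_lt_norm_sub_le_inv h
    interval_cases k
    · rw [psi0_of_norm_le_half (by simpa using hxk)]; simp
    · rw [psi0_of_norm_sub_one_le_half (by simpa using hxk)]; simp
  · rw [Set.indicator_of_notMem (show x ∉ {y : ℚ_[2] | ‖y‖ ≤ 1} from h),
      psi0_of_one_lt_norm (not_le.1 h), zero_mul]

theorem one_lt_norm_sub_of_mem_I2 {a b : ℚ_[2]} (ha : a ∈ I2) (hb : b ∈ I2) (hne : a ≠ b) :
    1 < ‖a - b‖ := by
  obtain ⟨γ, m, hm, rfl⟩ := ha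
  obtain ⟨δ, n, hn, rfl⟩ := hb
  refine lt_of_not_ge fun h => hne ?_
  exact_mod_cast Padic.eq_of_norm_sub_le_one (p := 2) hm hn (by exact_mod_cast h)

theorem psi0_sub_mul_conj_psi0_sub_of_one_lt_norm {a b : ℚ_[2]} (hab : 1 < ‖a - b‖)
    (x : ℚ_[2]) : psi0 (x - a) * starRingEnd ℂ (psi0 (x - b)) = 0 := by
  by_cases ha : ‖x - a‖ ≤ 1
  · have hb : 1 < ‖x - b‖ := by
      by_contra! hb
      refine hab.not_ge ?_
      calc ‖a - b‖ = ‖(x - b) + -(x - a)‖ := by congr 1; abel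
        _ ≤ max ‖x - b‖ ‖-(x - a)‖ := IsUltrametricDist.norm_add_le_max _ _
        _ ≤ 1 := by rw [norm_neg]; exact max_le hb ha
    rw [psi0_of_one_lt_norm hb, map_zero, mul_zero]
  · rw [psi0_of_one_lt_norm (not_le.1 ha), zero_mul]

theorem wavelet_shifts_orthonormal [MeasurableSpace ℚ_[2]] [BorelSpace ℚ_[2]]
    (μ : Measure ℚ_[2]) [μ.IsAddHaarMeasure]
    (hμ : μ {x : ℚ_[2] | ‖x‖ ≤ 1} = 1)
    (a b : ℚ_[2]) (ha : a ∈ I2) (hb : b ∈ I2) :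
    (a = b → ∫ x, psi0 (x - a) * (starRingEnd ℂ) (psi0 (x - b)) ∂μ = 1) ∧
    (a ≠ b → ∫ x, psi0 (x - a) * (starRingEnd ℂ) (psi0 (x - b)) ∂μ = 0) := by
  refine ⟨?_, fun hne => ?_⟩
  · rintro rfl
    have hball : MeasurableSet {x : ℚ_[2] | ‖x‖ ≤ 1} :=
      measurableSet_le measurable_norm measurable_const
    calc ∫ x, psi0 (x - a) * starRingEnd ℂ (psi0 (x - a)) ∂μ
        = ∫ x, {y : ℚ_[2] | ‖y‖ ≤ 1}.indicator (fun _ => (1 : ℂ)) (x - a) ∂μ := by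
          simp_rw [psi0_mul_conj_self]; rfl
      _ = ∫ x, {y : ℚ_[2] | ‖y‖ ≤ 1}.indicator (fun _ => (1 : ℂ)) x ∂μ :=
          integral_sub_right_eq_self _ a
      _ = μ.real {x : ℚ_[2] | ‖x‖ ≤ 1} • (1 : ℂ) := integral_indicator_const _ hball
      _ = 1 := by simp [Measure.real, hμ]
  · simp_rw [psi0_sub_mul_conj_psi0_sub_of_one_lt_norm (one_lt_norm_sub_of_mem_I2 ha hb hne)]
    exact integral_zero _ _
end

section
/- For every a ∈ ℚ_2 and every x ∈ ℚ_2, φ(x/2 − a) = (1/2)·(φ(x − 2a) + ψ⁰(x − 2a)). Consequently V_1 = V_0 ⊕ W_0, where W_0 is the orthogonal complement of V_0 in V_1 and is the closed span of the shifts ψ⁰(·−a), a ∈ I_2. -/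
open MeasureTheory

/-- The space `V_j`: the closed `ℂ`-linear span in `L²(ℚ_2, μ)` of the functions
`x ↦ φ(2^{-j} x − a)`, `a ∈ I_2`. -/
noncomputable def Vsp [MeasurableSpace ℚ_[2]] (μ : Measure ℚ_[2]) (j : ℤ) :
    Submodule ℂ (Lp ℂ 2 μ) :=
  (Submodule.span ℂ {f : Lp ℂ 2 μ | ∃ a ∈ I2,
    (f : ℚ_[2] → ℂ) =ᵐ[μ] fun x => phi2 ((2 : ℚ_[2]) ^ (-j) * x - a)}).topologicalClosure

/-- The wavelet space `W_0`: the closed `ℂ`-linear span in `L²(ℚ_2, μ)` of the shifts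
`x ↦ ψ⁰(x − a)`, `a ∈ I_2`. -/
noncomputable def W0sp [MeasurableSpace ℚ_[2]] (μ : Measure ℚ_[2]) :
    Submodule ℂ (Lp ℂ 2 μ) :=
  (Submodule.span ℂ {f : Lp ℂ 2 μ | ∃ a ∈ I2,
    (f : ℚ_[2] → ℂ) =ᵐ[μ] fun x => psi0 (x - a)}).topologicalClosure

/-!
`ℤ₂` is the disjoint union of the cosets `2ℤ₂` and `1 + 2ℤ₂` (the residue field is `𝔽₂`), which is
the refinement equation `φ(x) = φ(x/2) + φ(x/2 - 1/2)`. With `ψ⁰ = φ(·/2) - φ(·/2 - 1/2)` it gives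
the pointwise identity and puts the generators of `V₀` and `W₀` into `V₁`; writing `2a = q + b`
with `q ∈ ℕ`, `b ∈ I₂` and using that `φ` is `1`-periodic and `ψ⁰` is `1`-antiperiodic, it also puts
the generators of `V₁` into `V₀ + W₀`. The same (anti)periodicity makes `x ↦ conj φ(x - a) ψ⁰(x - b)`
change sign under the Haar-measure-preserving translation by `1`, so `V₀ ⊥ W₀`; the sum of two
orthogonal closed subspaces is closed, hence contains the closed span `V₁`.
-/

open Function Metric

lemma phi2_eq_indicator_closedBall : phi2 = (closedBall 0 1).indicator 1 := by
  rw [phi2]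
  congr 1
  ext
  simp

lemma phi2_apply (y : ℚ_[2]) : phi2 y = if ‖y‖ ≤ 1 then 1 else 0 := by
  simp [phi2, Set.indicator_apply]

lemma norm_div_two_le_one_iff (y : ℚ_[2]) : ‖y / 2‖ ≤ 1 ↔ ‖y‖ < 1 := by
  have h := Padic.norm_le_pow_iff_norm_lt_pow_add_one y (-1)
  have h2 : ‖(2 : ℚ_[2])‖ = 2⁻¹ := by simpa using Padic.norm_p (p := 2)
  rw [norm_div, h2]
  norm_num at h ⊢
  rw [← h]
  constructor <;> intro <;> linarith

lemma norm_lt_one_or_norm_sub_one_lt_one {y : ℚ_[2]} (hy : ‖y‖ ≤ 1) :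
    ‖y‖ < 1 ∨ ‖y - 1‖ < 1 := by
  obtain ⟨n, hn, hmem⟩ := PadicInt.exists_mem_range (⟨y, hy⟩ : ℤ_[2])
  rw [IsLocalRing.mem_maximalIdeal, PadicInt.mem_nonunits] at hmem
  change ‖y - (n : ℚ_[2])‖ < 1 at hmem
  interval_cases n
  · left; simpa using hmem
  · right; simpa using hmem

lemma phi2_div_two (y : ℚ_[2]) : phi2 (y / 2) = if ‖y‖ < 1 then 1 else 0 := by
  simp only [phi2_apply, norm_div_two_le_one_iff]

lemma phi2_eq_add (y : ℚ_[2]) : phi2 y = phi2 (y / 2) + phi2 (y / 2 - 1 / 2) := by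
  have hy := Padic.nonarchimedean (y - 1) 1
  have h1 := Padic.nonarchimedean y (-(y - 1))
  rw [sub_add_cancel, norm_one] at hy
  rw [← sub_eq_add_neg, sub_sub_cancel, norm_neg, norm_one] at h1
  rw [div_sub_div_same, phi2_div_two, phi2_div_two, phi2_apply]
  by_cases h : ‖y‖ ≤ 1
  · rcases norm_lt_one_or_norm_sub_one_lt_one h with h' | h' <;>
    · split_ifs <;> grind
  · split_ifs <;> grind

lemma phi2_periodic {c : ℚ_[2]} (hc : ‖c‖ ≤ 1) : Periodic phi2 c := by
  intro y
  have h1 := Padic.nonarchimedean (y + c) (-c)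
  have h2 := Padic.nonarchimedean y c
  rw [add_neg_cancel_right, norm_neg] at h1
  simp only [phi2_apply]
  congr 1
  exact propext ⟨fun h => h1.trans (max_le h hc), fun h => h2.trans (max_le h hc)⟩

lemma psi0_antiperiodic : Antiperiodic psi0 1 := by
  intro y
  rw [psi0, psi0, show (y + 1) / 2 - 1 / 2 = y / 2 by ring,
    show (y + 1) / 2 = y / 2 - 1 / 2 + 1 by ring, phi2_periodic (by simp)]
  ring

lemma phi2_div_two_sub (a x : ℚ_[2]) :
    phi2 (x / 2 - a) = (1 / 2 : ℂ) * (phi2 (x - 2 * a) + psi0 (x - 2 * a)) := by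
  rw [phi2_eq_add (x - 2 * a), psi0, show x / 2 - a = (x - 2 * a) / 2 by ring]
  ring

lemma phi2_div_two_sub_of_two_mul_eq {a b : ℚ_[2]} {q : ℕ} (hab : 2 * a = q + b) (x : ℚ_[2]) :
    phi2 (x / 2 - a) = (1 / 2 : ℂ) * phi2 (x - b) + (-1) ^ q / 2 * psi0 (x - b) := by
  have hq : ‖(q : ℚ_[2])‖ ≤ 1 := by exact_mod_cast Padic.norm_int_le_one (q : ℤ)
  rw [phi2_div_two_sub, show x - 2 * a = x - b - q • 1 by rw [hab, nsmul_one]; ring,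
    psi0_antiperiodic.sub_nsmul_eq, nsmul_one, (phi2_periodic hq).sub_eq]
  push_cast [zsmul_eq_mul]
  ring

lemma phi2_sub_eq_add (a x : ℚ_[2]) :
    phi2 (x - a) = phi2 (2⁻¹ * x - a / 2) + phi2 (2⁻¹ * x - (a + 1) / 2) := by
  rw [phi2_eq_add (x - a)]
  ring_nf

lemma psi0_sub_eq_sub (a x : ℚ_[2]) :
    psi0 (x - a) = phi2 (2⁻¹ * x - a / 2) - phi2 (2⁻¹ * x - (a + 1) / 2) := by
  rw [psi0]
  ring_nf

lemma continuous_phi2 : Continuous phi2 := by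
  rw [phi2_eq_indicator_closedBall]
  exact continuous_const.indicator (by simp [IsUltrametricDist.frontier_closedBall_eq_empty])

lemma hasCompactSupport_phi2 : HasCompactSupport phi2 := by
  rw [phi2_eq_indicator_closedBall]
  exact HasCompactSupport.intro (isCompact_closedBall 0 1) fun x hx => Set.indicator_of_notMem hx _

lemma memLp_phi2_comp [MeasurableSpace ℚ_[2]] [OpensMeasurableSpace ℚ_[2]] (μ : Measure ℚ_[2])
    [IsFiniteMeasureOnCompacts μ] (p : ENNReal) {c : ℚ_[2]} (hc : c ≠ 0) (a : ℚ_[2]) :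
    MemLp (fun x => phi2 (c * x - a)) p μ :=
  (continuous_phi2.comp (by fun_prop)).memLp_of_hasCompactSupport
    (hasCompactSupport_phi2.comp_homeomorph
      ((Homeomorph.mulLeft₀ c hc).trans (Homeomorph.subRight a)))

lemma div_two_mem_I2 {a : ℚ_[2]} (ha : a ∈ I2) : a / 2 ∈ I2 := by
  obtain ⟨γ, m, hm, rfl⟩ := ha
  refine ⟨γ + 1, m, hm.trans (Nat.pow_lt_pow_succ one_lt_two), ?_⟩
  rw [pow_succ, div_div]

lemma add_one_div_two_mem_I2 {a : ℚ_[2]} (ha : a ∈ I2) : (a + 1) / 2 ∈ I2 := by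
  obtain ⟨γ, m, hm, rfl⟩ := ha
  refine ⟨γ + 1, m + 2 ^ γ, by rw [pow_succ]; omega, ?_⟩
  push_cast
  field_simp
  ring

lemma exists_natCast_add_mem_I2 (m γ : ℕ) :
    ∃ q : ℕ, ∃ b ∈ I2, (m : ℚ_[2]) / 2 ^ γ = q + b := by
  refine ⟨m / 2 ^ γ, (m % 2 ^ γ : ℕ) / 2 ^ γ, ⟨γ, _, Nat.mod_lt _ (by positivity), rfl⟩, ?_⟩
  conv_lhs => rw [← Nat.div_add_mod m (2 ^ γ)]
  push_cast
  field_simp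

lemma exists_two_mul_eq_natCast_add {a : ℚ_[2]} (ha : a ∈ I2) :
    ∃ q : ℕ, ∃ b ∈ I2, 2 * a = q + b := by
  obtain ⟨γ, m, -, rfl⟩ := ha
  rw [← mul_div_assoc, show (2 : ℚ_[2]) * m = (2 * m : ℕ) by push_cast; rfl]
  exact exists_natCast_add_mem_I2 _ _

namespace Submodule

variable {𝕜 E : Type*} [RCLike 𝕜] [NormedAddCommGroup E] [InnerProductSpace 𝕜 E]

theorem IsOrtho.topologicalClosure {U V : Submodule 𝕜 E} (h : U ⟂ V) :
    U.topologicalClosure ⟂ V.topologicalClosure := by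
  rw [isOrtho_iff_le, orthogonal_closure]
  exact topologicalClosure_minimal _ h (isClosed_orthogonal V)

theorem IsOrtho.isClosed_sup [CompleteSpace E] {U V : Submodule 𝕜 E} (h : U ⟂ V)
    (hU : IsClosed (U : Set E)) (hV : IsClosed (V : Set E)) :
    IsClosed ((U ⊔ V : Submodule 𝕜 E) : Set E) := by
  have := hU.completeSpace_coe
  have := hV.completeSpace_coe
  refine isClosed_of_closure_subset fun x hx => ?_
  have hxU := starProjection_apply_mem U x
  have hxV := starProjection_apply_mem V x
  have hd : x - U.starProjection x - V.starProjection x ∈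
      (U ⊔ V).topologicalClosure ⊓ (U ⊔ V).topologicalClosureᗮ := by
    refine ⟨sub_mem (sub_mem hx ((U ⊔ V).le_topologicalClosure (mem_sup_left hxU)))
      ((U ⊔ V).le_topologicalClosure (mem_sup_right hxV)), ?_⟩
    rw [orthogonal_closure, ← inf_orthogonal]
    refine ⟨sub_mem (sub_starProjection_mem_orthogonal x) (h.symm hxV), ?_⟩
    rw [sub_right_comm]
    exact sub_mem (sub_starProjection_mem_orthogonal x) (h hxU)
  rw [inf_orthogonal_eq_bot, mem_bot, sub_sub, sub_eq_zero] at hd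
  rw [SetLike.mem_coe, hd]
  exact add_mem (mem_sup_left hxU) (mem_sup_right hxV)

end Submodule

theorem MeasureTheory.Lp.eq_smul_add_smul_of_ae_eq {α 𝕜 E : Type*} [MeasurableSpace α]
    {μ : Measure α} {p : ENNReal} [NormedRing 𝕜] [NormedAddCommGroup E] [Module 𝕜 E]
    [IsBoundedSMul 𝕜 E] {f g h : Lp E p μ} {F G H : α → E} (c d : 𝕜)
    (hf : f =ᵐ[μ] F) (hg : g =ᵐ[μ] G) (hh : h =ᵐ[μ] H) (hFGH : ∀ x, F x = c • G x + d • H x) :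
    f = c • g + d • h := by
  apply Lp.ext
  filter_upwards [hf, hg, hh, Lp.coeFn_add (c • g) (d • h), Lp.coeFn_smul c g,
    Lp.coeFn_smul d h] with x hfx hgx hhx hadd hcg hdh
  rw [hadd, Pi.add_apply, hcg, hdh, Pi.smul_apply, Pi.smul_apply, hfx, hgx, hhx, hFGH]

section Spaces

variable [MeasurableSpace ℚ_[2]] (μ : Measure ℚ_[2])

lemma mem_Vsp_of_ae_eq {j : ℤ} {a : ℚ_[2]} (ha : a ∈ I2) {f : Lp ℂ 2 μ}
    (hf : f =ᵐ[μ] fun x => phi2 (2 ^ (-j) * x - a)) : f ∈ Vsp μ j :=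
  Submodule.le_topologicalClosure _ (Submodule.subset_span ⟨a, ha, hf⟩)

lemma mem_W0sp_of_ae_eq {a : ℚ_[2]} (ha : a ∈ I2) {f : Lp ℂ 2 μ}
    (hf : f =ᵐ[μ] fun x => psi0 (x - a)) : f ∈ W0sp μ :=
  Submodule.le_topologicalClosure _ (Submodule.subset_span ⟨a, ha, hf⟩)

variable [OpensMeasurableSpace ℚ_[2]] [IsFiniteMeasureOnCompacts μ]

lemma exists_mem_Vsp_ae_eq (j : ℤ) {a : ℚ_[2]} (ha : a ∈ I2) :
    ∃ g ∈ Vsp μ j, g =ᵐ[μ] fun x => phi2 (2 ^ (-j) * x - a) :=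
  have hg := memLp_phi2_comp μ 2 (zpow_ne_zero (-j) two_ne_zero) a
  ⟨hg.toLp, mem_Vsp_of_ae_eq μ ha hg.coeFn_toLp, hg.coeFn_toLp⟩

lemma exists_mem_W0sp_ae_eq {a : ℚ_[2]} (ha : a ∈ I2) :
    ∃ g ∈ W0sp μ, g =ᵐ[μ] fun x => psi0 (x - a) := by
  have hg : MemLp (fun x => psi0 (x - a)) 2 μ := by
    simp_rw [psi0_sub_eq_sub]
    exact (memLp_phi2_comp μ 2 (inv_ne_zero two_ne_zero) _).sub
      (memLp_phi2_comp μ 2 (inv_ne_zero two_ne_zero) _)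
  exact ⟨hg.toLp, mem_W0sp_of_ae_eq μ ha hg.coeFn_toLp, hg.coeFn_toLp⟩

lemma Vsp_zero_le_Vsp_one : Vsp μ 0 ≤ Vsp μ 1 := by
  refine Submodule.topologicalClosure_minimal _ (Submodule.span_le.2 ?_)
    (Submodule.isClosed_topologicalClosure _)
  rintro f ⟨a, ha, hf⟩
  obtain ⟨g, hg, hgf⟩ := exists_mem_Vsp_ae_eq μ 1 (div_two_mem_I2 ha)
  obtain ⟨h, hh, hhf⟩ := exists_mem_Vsp_ae_eq μ 1 (add_one_div_two_mem_I2 ha)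
  rw [SetLike.mem_coe, Lp.eq_smul_add_smul_of_ae_eq (1 : ℂ) 1 hf hgf hhf fun x => by
    simpa using phi2_sub_eq_add a x]
  exact add_mem (Submodule.smul_mem _ _ hg) (Submodule.smul_mem _ _ hh)

lemma W0sp_le_Vsp_one : W0sp μ ≤ Vsp μ 1 := by
  refine Submodule.topologicalClosure_minimal _ (Submodule.span_le.2 ?_)
    (Submodule.isClosed_topologicalClosure _)
  rintro f ⟨a, ha, hf⟩
  obtain ⟨g, hg, hgf⟩ := exists_mem_Vsp_ae_eq μ 1 (div_two_mem_I2 ha)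
  obtain ⟨h, hh, hhf⟩ := exists_mem_Vsp_ae_eq μ 1 (add_one_div_two_mem_I2 ha)
  rw [SetLike.mem_coe, Lp.eq_smul_add_smul_of_ae_eq (1 : ℂ) (-1) hf hgf hhf fun x => by
    simpa [sub_eq_add_neg] using psi0_sub_eq_sub a x]
  exact add_mem (Submodule.smul_mem _ _ hg) (Submodule.smul_mem _ _ hh)

end Spaces

section HaarSpaces

variable [MeasurableSpace ℚ_[2]] [BorelSpace ℚ_[2]] (μ : Measure ℚ_[2]) [μ.IsAddHaarMeasure]

open scoped InnerProductSpace ComplexConjugate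

lemma Vsp_zero_isOrtho_W0sp : Vsp μ 0 ⟂ W0sp μ := by
  refine (Submodule.isOrtho_span.2 ?_).topologicalClosure
  rintro f ⟨a, -, hf⟩ g ⟨b, -, hg⟩
  have hφ : ∀ x, phi2 (x + 1 - a) = phi2 (x - a) := (phi2_periodic (by simp)).sub_const a
  have hψ : ∀ x, psi0 (x + 1 - b) = -psi0 (x - b) := psi0_antiperiodic.sub_const b
  calc ⟪f, g⟫_ℂ = ∫ x, conj (phi2 (x - a)) * psi0 (x - b) ∂μ := by
        rw [L2.inner_def]
        refine integral_congr_ae ?_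
        filter_upwards [hf, hg] with x hfx hgx
        simp [hfx, hgx, mul_comm]
    _ = 0 := integral_eq_zero_of_add_right_eq_neg (g := 1) fun x => by rw [hφ x, hψ x, mul_neg]

lemma Vsp_one_le_sup : Vsp μ 1 ≤ Vsp μ 0 ⊔ W0sp μ := by
  refine Submodule.topologicalClosure_minimal _ (Submodule.span_le.2 ?_)
    ((Vsp_zero_isOrtho_W0sp μ).isClosed_sup (Submodule.isClosed_topologicalClosure _)
      (Submodule.isClosed_topologicalClosure _))
  rintro f ⟨a, ha, hf⟩
  obtain ⟨q, b, hb, hab⟩ := exists_two_mul_eq_natCast_add ha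
  obtain ⟨g, hg, hgf⟩ := exists_mem_Vsp_ae_eq μ 0 hb
  obtain ⟨h, hh, hhf⟩ := exists_mem_W0sp_ae_eq μ hb
  rw [SetLike.mem_coe, Lp.eq_smul_add_smul_of_ae_eq (1 / 2 : ℂ) ((-1) ^ q / 2) hf hgf hhf
    fun x => by simpa [div_eq_inv_mul] using phi2_div_two_sub_of_two_mul_eq hab x]
  exact add_mem (Submodule.mem_sup_left (Submodule.smul_mem _ _ hg))
    (Submodule.mem_sup_right (Submodule.smul_mem _ _ hh))

end HaarSpaces

theorem refinable_splits_and_V1_eq_V0_oplus_W0_general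
    [MeasurableSpace ℚ_[2]] [BorelSpace ℚ_[2]]
    (μ : Measure ℚ_[2]) [μ.IsAddHaarMeasure] :
    (∀ a x : ℚ_[2], phi2 (x / 2 - a) =
      (1 / 2 : ℂ) * (phi2 (x - 2 * a) + psi0 (x - 2 * a))) ∧
    Vsp μ 0 ⊔ W0sp μ = Vsp μ 1 ∧
    (∀ f ∈ Vsp μ 0, ∀ g ∈ W0sp μ, inner (𝕜 := ℂ) f g = 0) :=
  ⟨phi2_div_two_sub,
    le_antisymm (sup_le (Vsp_zero_le_Vsp_one μ) (W0sp_le_Vsp_one μ)) (Vsp_one_le_sup μ),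
    fun _ hf _ hg => (Vsp_zero_isOrtho_W0sp μ).inner_eq hf hg⟩

theorem refinable_splits_and_V1_eq_V0_oplus_W0
    [MeasurableSpace ℚ_[2]] [BorelSpace ℚ_[2]]
    (μ : Measure ℚ_[2]) [μ.IsAddHaarMeasure]
    (hμ : μ {x : ℚ_[2] | ‖x‖ ≤ 1} = 1) :
    (∀ a x : ℚ_[2], phi2 (x / 2 - a) =
      (1 / 2 : ℂ) * (phi2 (x - 2 * a) + psi0 (x - 2 * a))) ∧
    Vsp μ 0 ⊔ W0sp μ = Vsp μ 1 ∧
    (∀ f ∈ Vsp μ 0, ∀ g ∈ W0sp μ, inner (𝕜 := ℂ) f g = 0) :=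
  refinable_splits_and_V1_eq_V0_oplus_W0_general μ
end
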